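/- Let β = π/N, N ≥ 2, and Oh(x) = Σ_{k=0}^{N−1}[h(Υ_{2β}^k x) − h(𝔯 Υ_{2β}^k x)]. Then Oh is odd with respect to reflection about the line through the origin at angle β: for all c ≥ 0 and all angles α, Oh(c Υ_α Υ_β e₁) = −Oh(c Υ_{−α} Υ_β e₁), where e₁ = (1,0). -/

import Mathlib

/-- Counterclockwise rotation of ℝ² by angle θ. -/
noncomputable def rot (θ : ℝ) (x : ℝ × ℝ) : ℝ × ℝ :=
  (x.1 * Real.cos θ - x.2 * Real.sin θ, x.1 * Real.sin θ + x.2 * Real.cos θ)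

/-- Reflection of ℝ² about the x₁-axis. -/
def refl2 (x : ℝ × ℝ) : ℝ × ℝ := (x.1, -x.2)

/-- The "odd" operator: Oh(x) = Σ_{k=0}^{N-1} [h(Υ_{2β}^k x) − h(𝔯 Υ_{2β}^k x)]. -/
noncomputable def oddOp (N : ℕ) (β : ℝ) (h : ℝ × ℝ → ℝ) (x : ℝ × ℝ) : ℝ :=
  ∑ k ∈ Finset.range N, (h (rot ((2 * β) * k) x) - h (refl2 (rot ((2 * β) * k) x)))

/-!
In polar coordinates `Oh(r, φ) = Σₖ [h(r, φ + 2βk) − h(r, −(φ + 2βk))]`. Reversing the order of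
summation, `k ↦ N − 1 − k`, and using `2βN = 2π`, the angle `β + α + 2β(N − 1 − k)` becomes
`2π − (β − α + 2βk)`, so the two families of terms of `Oh(r, β + α)` are those of `Oh(r, β − α)`
with their roles exchanged.
-/

open Real

lemma rot_polarCoord_symm (θ r φ : ℝ) :
    rot θ (polarCoord.symm (r, φ)) = polarCoord.symm (r, φ + θ) := by
  simp only [rot, polarCoord_symm_apply, cos_add, sin_add, Prod.mk.injEq]
  constructor <;> ring

lemma refl2_polarCoord_symm (r φ : ℝ) :
    refl2 (polarCoord.symm (r, φ)) = polarCoord.symm (r, -φ) := by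
  simp [refl2]

lemma polarCoord_symm_add_two_pi (r φ : ℝ) :
    polarCoord.symm (r, φ + 2 * π) = polarCoord.symm (r, φ) := by
  simp

lemma polarCoord_symm_sub_two_pi (r φ : ℝ) :
    polarCoord.symm (r, φ - 2 * π) = polarCoord.symm (r, φ) := by
  simp

lemma smul_rot_rot_one_zero (c α β : ℝ) :
    c • rot α (rot β (1, 0)) = polarCoord.symm (c, β + α) := by
  simp only [rot, polarCoord_symm_apply, Prod.smul_mk, smul_eq_mul, cos_add, sin_add,
    Prod.mk.injEq]
  constructor <;> ring

lemma oddOp_polarCoord_symm (N : ℕ) (β : ℝ) (h : ℝ × ℝ → ℝ) (r φ : ℝ) :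
    oddOp N β h (polarCoord.symm (r, φ)) =
      ∑ k ∈ Finset.range N,
        (h (polarCoord.symm (r, φ + 2 * β * k)) - h (polarCoord.symm (r, -(φ + 2 * β * k)))) := by
  simp only [oddOp, rot_polarCoord_symm, refl2_polarCoord_symm]

lemma oddOp_polarCoord_symm_add_eq_neg_sub (N : ℕ) (β : ℝ) (hβ : N * β = π)
    (h : ℝ × ℝ → ℝ) (r α : ℝ) :
    oddOp N β h (polarCoord.symm (r, β + α)) = -oddOp N β h (polarCoord.symm (r, β - α)) := by
  rw [oddOp_polarCoord_symm, oddOp_polarCoord_symm, ← Finset.sum_range_reflect,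
    ← Finset.sum_neg_distrib]
  refine Finset.sum_congr rfl fun k hk => ?_
  have hk : k + 1 ≤ N := Finset.mem_range.mp hk
  have hangle : β + α + 2 * β * ((N - 1 - k : ℕ) : ℝ) = -(β - α + 2 * β * k) + 2 * π := by
    rw [Nat.sub_sub, Nat.cast_sub (by omega)]
    push_cast
    linear_combination 2 * hβ
  rw [hangle]
  generalize β - α + 2 * β * (k : ℝ) = φ
  rw [polarCoord_symm_add_two_pi, neg_add, neg_neg, ← sub_eq_add_neg,
    polarCoord_symm_sub_two_pi]
  ring

theorem oddOp_odd_about_beta_line_general (N : ℕ) (β : ℝ) (hβ : β = Real.pi / N)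
    (h : ℝ × ℝ → ℝ) :
    ∀ (c : ℝ), 0 ≤ c → ∀ (α : ℝ),
      oddOp N β h (c • rot α (rot β ((1 : ℝ), (0 : ℝ)))) =
        -oddOp N β h (c • rot (-α) (rot β ((1 : ℝ), (0 : ℝ)))) := by
  intro c _ α
  obtain rfl | hN := eq_or_ne N 0
  · simp [oddOp]
  rw [smul_rot_rot_one_zero, smul_rot_rot_one_zero, ← sub_eq_add_neg]
  exact oddOp_polarCoord_symm_add_eq_neg_sub N β (by rw [hβ]; field_simp) h c α

/-- Oh is odd with respect to reflection about the line through the origin at angle β: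
`Oh(c Υ_α Υ_β e₁) = −Oh(c Υ_{−α} Υ_β e₁)` where e₁ = (1,0). -/
theorem oddOp_odd_about_beta_line (N : ℕ) (hN : 2 ≤ N) (β : ℝ) (hβ : β = Real.pi / N)
    (h : ℝ × ℝ → ℝ) (hc : Continuous h) :
    ∀ (c : ℝ), 0 ≤ c → ∀ (α : ℝ),
      oddOp N β h (c • rot α (rot β ((1 : ℝ), (0 : ℝ)))) =
        -oddOp N β h (c • rot (-α) (rot β ((1 : ℝ), (0 : ℝ)))) :=
  oddOp_odd_about_beta_line_general N β hβ h
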